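/- (Theorem 3.2, parts (1) and (2).) For every symmetric approximate design P: (1) C(P) is completely symmetric, i.e., all its diagonal entries are equal and all its off-diagonal entries are equal; (2) tr(C(P)) = n · min_{x∈ℝ} ∑_s p_s q_s(x). -/

import Mathlib

open Matrix Finset

noncomputable section

/-- `B^m_{i,j}`: the `i × j` real matrix whose upper-left `m × m` block is
`B_m = I_m − J_m/m` and whose remaining entries are `0`. -/
def Bblock (m i j : ℕ) : Matrix (Fin i) (Fin j) ℝ :=
  Matrix.of fun a b =>
    if (a : ℕ) < m ∧ (b : ℕ) < m then
      (if (a : ℕ) = (b : ℕ) then 1 else 0) - 1 / (m : ℝ)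
    else 0

/-- `B_k = I_k − J_k/k`. -/
def Bsq (k : ℕ) : Matrix (Fin k) (Fin k) ℝ := Bblock k k k

/-- Partial sums `a_{j,k} = ∑_{i=j}^k a_i`. -/
def aInt (a : ℕ → ℝ) (j k : ℕ) : ℝ := ∑ i ∈ Finset.Icc j k, a i

/-- `α_k = n⁻¹((n+1)a_k + a_{1,k−1}^{n+1} − a_{1,k}^{n+1})`. -/
def alphaCoef (n : ℕ) (a : ℕ → ℝ) (k : ℕ) : ℝ :=
  (((n : ℝ) + 1) * a k + (aInt a 1 (k - 1)) ^ (n + 1) - (aInt a 1 k) ^ (n + 1)) / (n : ℝ)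

/-- `β_k = a_k + a_{k+1,p} a_{1,k}^n − a_{k,p} a_{1,k−1}^n`. -/
def betaCoef (p n : ℕ) (a : ℕ → ℝ) (k : ℕ) : ℝ :=
  a k + aInt a (k + 1) p * (aInt a 1 k) ^ n - aInt a k p * (aInt a 1 (k - 1)) ^ n

/-- `A = ∑_{k=1}^p α_k B^k_p`. -/
def Amat (p n : ℕ) (a : ℕ → ℝ) : Matrix (Fin p) (Fin p) ℝ :=
  ∑ k ∈ Finset.Icc 1 p, alphaCoef n a k • Bblock k p p

/-- `B = ∑_{k=1}^p β_k B^k_p`. -/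
def Bmat (p n : ℕ) (a : ℕ → ℝ) : Matrix (Fin p) (Fin p) ℝ :=
  ∑ k ∈ Finset.Icc 1 p, betaCoef p n a k • Bblock k p p


/-- Treatment/period incidence matrix `T_s` of a treatment sequence `s`
(periods are indexed by `Fin p`, treatments by `Fin t`). -/
def Tmat {p t : ℕ} (s : Fin p → Fin t) : Matrix (Fin p) (Fin t) ℝ :=
  Matrix.of fun k i => if s k = i then 1 else 0

/-- Carryover incidence matrix `F_s`: `(F_s)_{k,i} = 1` iff `k ≥ 2` and the
treatment in period `k − 1` is `i`. -/
def Fmat {p t : ℕ} (s : Fin p → Fin t) : Matrix (Fin p) (Fin t) ℝ :=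
  Matrix.of fun k i =>
    if (k : ℕ) = 0 then 0
    else if s ⟨(k : ℕ) - 1, lt_of_le_of_lt (Nat.sub_le _ _) k.isLt⟩ = i then 1 else 0

/-- `T̂_s = T_s B_t`. -/
def That {p t : ℕ} (s : Fin p → Fin t) : Matrix (Fin p) (Fin t) ℝ := Tmat s * Bsq t

/-- `F̂_s = F_s B_t`. -/
def Fhat {p t : ℕ} (s : Fin p → Fin t) : Matrix (Fin p) (Fin t) ℝ := Fmat s * Bsq t

/-- An approximate design: a probability vector indexed by all `t^p` sequences. -/
def IsDesign {p t : ℕ} (P : (Fin p → Fin t) → ℝ) : Prop :=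
  (∀ s, 0 ≤ P s) ∧ ∑ s, P s = 1

/-- A design is symmetric if it is invariant under relabeling of treatments. -/
def IsSymmetricDesign {p t : ℕ} (P : (Fin p → Fin t) → ℝ) : Prop :=
  ∀ (σ : Equiv.Perm (Fin t)) (s : Fin p → Fin t), P (fun k => σ (s k)) = P s

/-- `T̄ = ∑_s p_s T_s`. -/
def Tbar {p t : ℕ} (P : (Fin p → Fin t) → ℝ) : Matrix (Fin p) (Fin t) ℝ :=
  ∑ s, P s • Tmat s

/-- `F̄ = ∑_s p_s F_s`. -/
def Fbar {p t : ℕ} (P : (Fin p → Fin t) → ℝ) : Matrix (Fin p) (Fin t) ℝ :=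
  ∑ s, P s • Fmat s

/-- `C₁₁(P) = n(∑_s p_s T_s' A T_s − T̄' B T̄)`. -/
def C11 (p t n : ℕ) (a : ℕ → ℝ) (P : (Fin p → Fin t) → ℝ) : Matrix (Fin t) (Fin t) ℝ :=
  (n : ℝ) • (∑ s, P s • ((Tmat s)ᵀ * Amat p n a * Tmat s) - (Tbar P)ᵀ * Bmat p n a * Tbar P)

/-- `C₁₂(P) = n(∑_s p_s T_s' A F_s − T̄' B F̄)`. -/
def C12 (p t n : ℕ) (a : ℕ → ℝ) (P : (Fin p → Fin t) → ℝ) : Matrix (Fin t) (Fin t) ℝ :=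
  (n : ℝ) • (∑ s, P s • ((Tmat s)ᵀ * Amat p n a * Fmat s) - (Tbar P)ᵀ * Bmat p n a * Fbar P)

/-- `C₂₂(P) = n(∑_s p_s F_s' A F_s − F̄' B F̄)`. -/
def C22 (p t n : ℕ) (a : ℕ → ℝ) (P : (Fin p → Fin t) → ℝ) : Matrix (Fin t) (Fin t) ℝ :=
  (n : ℝ) • (∑ s, P s • ((Fmat s)ᵀ * Amat p n a * Fmat s) - (Fbar P)ᵀ * Bmat p n a * Fbar P)

/-- `W` is a generalized inverse of `C`. -/
def IsGInv {t : ℕ} (C W : Matrix (Fin t) (Fin t) ℝ) : Prop := C * W * C = C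

/-- The information matrix `C(P) = C₁₁(P) − C₁₂(P) W C₂₁(P)`, computed with a
generalized inverse `W` of `C₂₂(P)` (its value does not depend on the choice). -/
def CInfo (p t n : ℕ) (a : ℕ → ℝ) (P : (Fin p → Fin t) → ℝ)
    (W : Matrix (Fin t) (Fin t) ℝ) : Matrix (Fin t) (Fin t) ℝ :=
  C11 p t n a P - C12 p t n a P * W * (C12 p t n a P)ᵀ

/-- The `t × t` permutation matrix of a permutation `σ` of the treatments. -/
def permMat (t : ℕ) (σ : Equiv.Perm (Fin t)) : Matrix (Fin t) (Fin t) ℝ :=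
  Matrix.of fun i j => if σ j = i then 1 else 0

/-- An optimality criterion: a real-valued function `Φ` on `t × t` real symmetric
matrices which is (C.1) concave, (C.2) invariant under simultaneous permutation of
rows and columns, and (C.3) nondecreasing under positive scaling of a positive
semidefinite matrix. -/
def IsCriterion (t : ℕ) (Φ : Matrix (Fin t) (Fin t) ℝ → ℝ) : Prop :=
  (∀ lam : ℝ, 0 ≤ lam → lam ≤ 1 → ∀ M N : Matrix (Fin t) (Fin t) ℝ,
      M.IsHermitian → N.IsHermitian →
      lam * Φ M + (1 - lam) * Φ N ≤ Φ (lam • M + (1 - lam) • N)) ∧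
  (∀ (σ : Equiv.Perm (Fin t)) (M : Matrix (Fin t) (Fin t) ℝ),
      Φ ((permMat t σ)ᵀ * M * permMat t σ) = Φ M) ∧
  (∀ M : Matrix (Fin t) (Fin t) ℝ, M.PosSemidef →
      ∀ b c : ℝ, 0 < b → b ≤ c → Φ (b • M) ≤ Φ (c • M))

/-- `P` is φ₁-universally optimal: `Φ(C(P)) ≥ Φ(C(Q))` for every design `Q` and
every optimality criterion `Φ`. -/
def IsUnivOptimal (p t n : ℕ) (a : ℕ → ℝ) (P : (Fin p → Fin t) → ℝ) : Prop :=
  ∀ Φ : Matrix (Fin t) (Fin t) ℝ → ℝ, IsCriterion t Φ →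
    ∀ Q : (Fin p → Fin t) → ℝ, IsDesign Q →
      ∀ WP WQ : Matrix (Fin t) (Fin t) ℝ,
        IsGInv (C22 p t n a P) WP → IsGInv (C22 p t n a Q) WQ →
          Φ (CInfo p t n a Q WQ) ≤ Φ (CInfo p t n a P WP)

/-- `q_{s,11} = tr(B_t T_s' A T_s B_t)`. -/
def q11 (p t n : ℕ) (a : ℕ → ℝ) (s : Fin p → Fin t) : ℝ :=
  (Bsq t * (Tmat s)ᵀ * Amat p n a * Tmat s * Bsq t).trace

/-- `q_{s,12} = tr(B_t T_s' A F_s B_t)`. -/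
def q12 (p t n : ℕ) (a : ℕ → ℝ) (s : Fin p → Fin t) : ℝ :=
  (Bsq t * (Tmat s)ᵀ * Amat p n a * Fmat s * Bsq t).trace

/-- `q_{s,22} = tr(B_t F_s' A F_s B_t)`. -/
def q22 (p t n : ℕ) (a : ℕ → ℝ) (s : Fin p → Fin t) : ℝ :=
  (Bsq t * (Fmat s)ᵀ * Amat p n a * Fmat s * Bsq t).trace

/-- The quadratic `q_s(x) = q_{s,11} + 2 q_{s,12} x + q_{s,22} x²`. -/
def qfun (p t n : ℕ) (a : ℕ → ℝ) (s : Fin p → Fin t) (x : ℝ) : ℝ :=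
  q11 p t n a s + 2 * q12 p t n a s * x + q22 p t n a s * x ^ 2

/-- `min_x ∑_s p_s q_s(x)`. -/
def qmin (p t n : ℕ) (a : ℕ → ℝ) (P : (Fin p → Fin t) → ℝ) : ℝ :=
  sInf (Set.range fun x : ℝ => ∑ s, P s * qfun p t n a s x)

/-- `y* = max_P min_x ∑_s p_s q_s(x)`, the maximum over all approximate designs. -/
def ystar (p t n : ℕ) (a : ℕ → ℝ) : ℝ :=
  sSup {y : ℝ | ∃ P : (Fin p → Fin t) → ℝ, IsDesign P ∧ y = qmin p t n a P}

/-! For a symmetric design every entry of `T̄` equals `1/t`, and `F_s = S T_s` for the shift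
matrix `S`, so each of `C₁₁`, `C₁₂`, `C₂₂` has the form `n(∑_s p_s T_s' X T_s − T̄' Y T̄)` and is
invariant under simultaneous permutations of the treatments, i.e. a combination of `I_t` and `J_t`.
`C₁₁` and `C₁₂` have zero row sums, hence are multiples `γ₁ B_t`, `γ₂ B_t`, while `C₂₂` acts as
`γ₃ B_t` on both sides of `B_t`. Sandwiching `C₂₂ W C₂₂ = C₂₂` between copies of `B_t` gives
`B_t W B_t = γ₃⁻¹ B_t`, so `C(P) = (γ₁ − γ₂²/γ₃) B_t`. Since `T̄ B_t = 0`, the coefficients are read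
off from `tr(B_t C_{ij} B_t) = n ∑_s p_s q_{s,ij}`, and `γ₁ − γ₂²/γ₃` is then `n/(t−1)` times the
minimum of the quadratic `∑_s p_s q_s`. That `γ₃ > 0` comes from `α_k ≥ 0`, `α_k > 0` when
`a_k > 0` (Bernoulli's inequality), and `B^k_p F̂_s ≠ 0` for `k ≥ 2`. -/

namespace Matrix

variable {ι R : Type*}

def IsPermInvariant (X : Matrix ι ι R) : Prop :=
  ∀ (σ : Equiv.Perm ι) (i j : ι), X (σ i) (σ j) = X i j

variable [DecidableEq ι]

lemma _root_.Equiv.Perm.exists_apply_eq_and_apply_eq {i j k l : ι} (hij : i ≠ j)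
    (hkl : k ≠ l) : ∃ σ : Equiv.Perm ι, σ i = k ∧ σ j = l := by
  have hj : Equiv.swap i k j ≠ k := by
    rw [Ne, Equiv.swap_apply_eq_iff, Equiv.swap_apply_right]
    exact hij.symm
  refine ⟨(Equiv.swap i k).trans (Equiv.swap (Equiv.swap i k j) l), ?_, ?_⟩
  · simp [Equiv.swap_apply_of_ne_of_ne hj.symm hkl]
  · simp

namespace IsPermInvariant

variable {X : Matrix ι ι R}

lemma apply_eq_of_ne (hX : X.IsPermInvariant) {i j k l : ι} (hij : i ≠ j) (hkl : k ≠ l) :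
    X i j = X k l := by
  obtain ⟨σ, rfl, rfl⟩ := Equiv.Perm.exists_apply_eq_and_apply_eq hij hkl
  exact (hX σ i j).symm

lemma apply_self_eq (hX : X.IsPermInvariant) (i k : ι) : X i i = X k k := by
  simpa using (hX (Equiv.swap i k) i i).symm

lemma eq_smul_one_add [CommRing R] (hX : X.IsPermInvariant) {i j : ι} (hij : i ≠ j) :
    X = (X i i - X i j) • 1 + X i j • vecMulVec 1 1 := by
  ext k l
  rcases eq_or_ne k l with rfl | hkl
  · simp [hX.apply_self_eq k i]
  · simp [hkl, hX.apply_eq_of_ne hkl hij]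

end IsPermInvariant

end Matrix

lemma sub_mul_mul_transpose_eq_smul {ι 𝕜 : Type*} [Fintype ι] [Field 𝕜]
    {K C₁₁ C₁₂ C₂₂ W : Matrix ι ι 𝕜} {γ₁ γ₂ γ₃ : 𝕜} (hK : K * K = K) (hKt : Kᵀ = K)
    (h₁₁ : C₁₁ = γ₁ • K) (h₁₂ : C₁₂ = γ₂ • K) (h₂₂l : K * C₂₂ = γ₃ • K)
    (h₂₂r : C₂₂ * K = γ₃ • K) (hγ₃ : γ₃ ≠ 0) (hW : C₂₂ * W * C₂₂ = C₂₂) :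
    C₁₁ - C₁₂ * W * C₁₂ᵀ = (γ₁ - γ₂ ^ 2 / γ₃) • K := by
  have hKWK : K * W * K = γ₃⁻¹ • K := by
    have h : (γ₃ * γ₃) • (K * W * K) = γ₃ • K := by
      calc (γ₃ * γ₃) • (K * W * K) = K * C₂₂ * W * (C₂₂ * K) := by
            rw [h₂₂l, h₂₂r, smul_mul, smul_mul, Matrix.mul_smul, smul_smul, Matrix.mul_assoc]
        _ = K * (C₂₂ * W * C₂₂) * K := by simp only [Matrix.mul_assoc]
        _ = γ₃ • K := by rw [hW, h₂₂l, smul_mul, hK]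
    rw [← inv_smul_smul₀ (mul_ne_zero hγ₃ hγ₃) (K * W * K), h, smul_smul, mul_inv, mul_assoc,
      inv_mul_cancel₀ hγ₃, mul_one]
  rw [h₁₁, h₁₂, transpose_smul, hKt, smul_mul, Matrix.mul_smul, smul_mul, hKWK, smul_smul,
    smul_smul, sub_smul]
  congr 2
  field_simp

lemma sInf_range_quadratic {a b c : ℝ} (hc : 0 < c) :
    sInf (Set.range fun x => a + 2 * b * x + c * x ^ 2) = a - b ^ 2 / c := by
  refine IsLeast.csInf_eq ⟨⟨-b / c, ?_⟩, ?_⟩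
  · field_simp
    ring
  · rintro _ ⟨x, rfl⟩
    have : a + 2 * b * x + c * x ^ 2 - (a - b ^ 2 / c) = (c * x + b) ^ 2 / c := by
      field_simp
      ring
    have : 0 ≤ (c * x + b) ^ 2 / c := by positivity
    linarith

lemma pow_sub_pow_le_mul_sub {c d : ℝ} (m : ℕ) (hc : 0 ≤ c) (hcd : c ≤ d) (hd : d ≤ 1) :
    d ^ m - c ^ m ≤ m * (d - c) := by
  rw [← geom_sum₂_mul]
  refine mul_le_mul_of_nonneg_right ?_ (sub_nonneg.2 hcd)
  calc ∑ i ∈ Finset.range m, d ^ i * c ^ (m - 1 - i) ≤ ∑ _i ∈ Finset.range m, (1 : ℝ) :=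
        Finset.sum_le_sum fun i _ =>
          mul_le_one₀ (pow_le_one₀ (hc.trans hcd) hd) (pow_nonneg hc _)
            (pow_le_one₀ hc (hcd.trans hd))
    _ = m := by simp

lemma pow_sub_pow_lt_mul_sub {c d : ℝ} {m : ℕ} (hm : 2 ≤ m) (hc : 0 ≤ c) (hcd : c < d)
    (hd : d ≤ 1) : d ^ m - c ^ m < m * (d - c) := by
  rw [← geom_sum₂_mul]
  refine mul_lt_mul_of_pos_right ?_ (sub_pos.2 hcd)
  calc ∑ i ∈ Finset.range m, d ^ i * c ^ (m - 1 - i) < ∑ _i ∈ Finset.range m, (1 : ℝ) :=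
        Finset.sum_lt_sum
          (fun i _ => mul_le_one₀ (pow_le_one₀ (hc.trans hcd.le) hd) (pow_nonneg hc _)
            (pow_le_one₀ hc (hcd.le.trans hd)))
          ⟨0, Finset.mem_range.2 (by omega), by
            simpa using pow_lt_one₀ hc (hcd.trans_le hd) (by omega : m - 1 ≠ 0)⟩
    _ = m := by simp

lemma trace_transpose_mul_self_nonneg {m l : Type*} [Fintype m] [Fintype l]
    (M : Matrix m l ℝ) : 0 ≤ (Mᵀ * M).trace := by
  simpa [conjTranspose_eq_transpose_of_trivial] using
    (posSemidef_conjTranspose_mul_self M).trace_nonneg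

lemma trace_transpose_mul_self_pos {m l : Type*} [Fintype m] [Fintype l]
    {M : Matrix m l ℝ} (hM : M ≠ 0) : 0 < (Mᵀ * M).trace := by
  refine (trace_transpose_mul_self_nonneg M).lt_of_ne' ?_
  simpa [conjTranspose_eq_transpose_of_trivial] using
    mt trace_conjTranspose_mul_self_eq_zero_iff.1 hM

section Bblock

variable {m q : ℕ}

lemma Bblock_transpose : (Bblock m q q)ᵀ = Bblock m q q := by
  ext a b
  simp only [transpose_apply, Bblock, of_apply, and_comm, eq_comm]

lemma Bblock_mulVec_apply (f : Fin q → ℝ) (a : Fin q) :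
    (Bblock m q q *ᵥ f) a =
      if (a : ℕ) < m then f a - (∑ c ∈ {c : Fin q | ↑c < m}, f c) / m else 0 := by
  split_ifs with ha
  · simp only [mulVec, dotProduct, Bblock, of_apply, ha, true_and, ite_mul, zero_mul]
    rw [← Finset.sum_filter, Finset.sum_div]
    simp_rw [sub_mul, Fin.val_inj, ite_mul, one_mul, zero_mul, div_mul_eq_mul_div, one_mul]
    rw [Finset.sum_sub_distrib, Finset.sum_ite_eq, if_pos (by simpa using ha)]
  · simp [mulVec, dotProduct, Bblock, ha]

lemma Bblock_mulVec_sub {a b : Fin q} (ha : (a : ℕ) < m) (hb : (b : ℕ) < m) (f : Fin q → ℝ) :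
    (Bblock m q q *ᵥ f) a - (Bblock m q q *ᵥ f) b = f a - f b := by
  rw [Bblock_mulVec_apply, Bblock_mulVec_apply, if_pos ha, if_pos hb]
  ring

lemma sum_filter_Bblock_mulVec (hm : m ≤ q) (f : Fin q → ℝ) :
    ∑ c ∈ {c : Fin q | ↑c < m}, (Bblock m q q *ᵥ f) c = 0 := by
  rcases Nat.eq_zero_or_pos m with rfl | hm0
  · simp
  rw [Finset.sum_congr rfl fun c hc => by
      rw [Bblock_mulVec_apply, if_pos (Finset.mem_filter.1 hc).2],
    Finset.sum_sub_distrib, Finset.sum_const, Fin.card_filter_val_lt, min_eq_right hm,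
    nsmul_eq_mul]
  field_simp
  ring

lemma Bblock_mulVec_one (hm : m ≤ q) : Bblock m q q *ᵥ 1 = 0 := by
  ext a
  rw [Bblock_mulVec_apply]
  split_ifs with ha
  · have : (m : ℝ) ≠ 0 := by exact_mod_cast (Nat.zero_lt_of_lt ha).ne'
    simp [Fin.card_filter_val_lt, min_eq_right hm, this]
  · rfl

lemma one_vecMul_Bblock (hm : m ≤ q) : 1 ᵥ* Bblock m q q = 0 := by
  rw [← Bblock_transpose, vecMul_transpose, Bblock_mulVec_one hm]

lemma Bblock_mul_self (hm : m ≤ q) : Bblock m q q * Bblock m q q = Bblock m q q := by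
  refine ext_of_mulVec_single fun j => ?_
  ext a
  rw [← mulVec_mulVec, Bblock_mulVec_apply, sum_filter_Bblock_mulVec hm, zero_div, sub_zero]
  split_ifs with ha
  · rfl
  · rw [Bblock_mulVec_apply, if_neg ha]

end Bblock

section Bsq

variable {t : ℕ}

lemma cast_sub_one_ne_zero (ht : 2 ≤ t) : (t : ℝ) - 1 ≠ 0 := by
  have : (2 : ℝ) ≤ t := by exact_mod_cast ht
  linarith

lemma Bsq_apply (i j : Fin t) : Bsq t i j = (if i = j then 1 else 0) - 1 / t := by
  simp [Bsq, Bblock, Fin.val_inj]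

lemma Bsq_eq : Bsq t = 1 - (t : ℝ)⁻¹ • vecMulVec 1 1 := by
  ext i j
  simp [Bsq_apply, one_apply]

lemma Bsq_transpose : (Bsq t)ᵀ = Bsq t := Bblock_transpose

lemma Bsq_mul_self : Bsq t * Bsq t = Bsq t := Bblock_mul_self le_rfl

lemma Bsq_mulVec_one : Bsq t *ᵥ 1 = 0 := Bblock_mulVec_one le_rfl

lemma one_vecMul_Bsq : 1 ᵥ* Bsq t = 0 := one_vecMul_Bblock le_rfl

lemma trace_Bsq (ht : t ≠ 0) : (Bsq t).trace = t - 1 := by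
  simp only [trace, diag_apply, Bsq_apply, if_true, Finset.sum_sub_distrib, Finset.sum_const,
    Finset.card_univ, Fintype.card_fin, nsmul_eq_mul, mul_one, one_div]
  field_simp

lemma mul_Bsq_of_mulVec_one_eq_zero {X : Matrix (Fin t) (Fin t) ℝ} (hX : X *ᵥ 1 = 0) :
    X * Bsq t = X := by
  rw [Bsq_eq, mul_sub, mul_one, Matrix.mul_smul, mul_vecMulVec, hX, zero_vecMulVec, smul_zero,
    sub_zero]

namespace Matrix.IsPermInvariant

variable {X : Matrix (Fin t) (Fin t) ℝ}

lemma exists_Bsq_mul_eq_smul (ht : 2 ≤ t) (hX : X.IsPermInvariant) :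
    ∃ γ : ℝ, Bsq t * X = γ • Bsq t ∧ X * Bsq t = γ • Bsq t := by
  have : Nontrivial (Fin t) := Fin.nontrivial_iff_two_le.2 ht
  obtain ⟨i, j, hij⟩ := exists_pair_ne (Fin t)
  refine ⟨X i i - X i j, ?_, ?_⟩ <;> conv_lhs => rw [hX.eq_smul_one_add hij]
  · rw [mul_add, Matrix.mul_smul, Matrix.mul_smul, mul_one, mul_vecMulVec, Bsq_mulVec_one,
      zero_vecMulVec, smul_zero, add_zero]
  · rw [add_mul, smul_mul, smul_mul, one_mul, vecMulVec_mul, one_vecMul_Bsq, vecMulVec_zero,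
      smul_zero, add_zero]

lemma Bsq_mul_eq_and_mul_Bsq_eq (ht : 2 ≤ t) (hX : X.IsPermInvariant) :
    Bsq t * X = ((Bsq t * X * Bsq t).trace / (t - 1)) • Bsq t ∧
      X * Bsq t = ((Bsq t * X * Bsq t).trace / (t - 1)) • Bsq t := by
  obtain ⟨γ, hl, hr⟩ := hX.exists_Bsq_mul_eq_smul ht
  have hγ : (Bsq t * X * Bsq t).trace / (t - 1) = γ := by
    rw [hl, smul_mul, Bsq_mul_self, trace_smul, trace_Bsq (by omega), smul_eq_mul,
      mul_div_cancel_right₀ _ (cast_sub_one_ne_zero ht)]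
  rw [hγ]
  exact ⟨hl, hr⟩

lemma eq_smul_Bsq (ht : 2 ≤ t) (hX : X.IsPermInvariant) (hX1 : X *ᵥ 1 = 0) :
    X = ((Bsq t * X * Bsq t).trace / (t - 1)) • Bsq t :=
  (mul_Bsq_of_mulVec_one_eq_zero hX1).symm.trans (hX.Bsq_mul_eq_and_mul_Bsq_eq ht).2

end Matrix.IsPermInvariant

end Bsq

section Design

variable {p t : ℕ} {P : (Fin p → Fin t) → ℝ}

lemma IsDesign.sum_mul_pos (hP : IsDesign P) {f : (Fin p → Fin t) → ℝ} (hf : ∀ s, 0 < f s) :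
    0 < ∑ s, P s * f s := by
  obtain ⟨s₀, hs₀⟩ : ∃ s, 0 < P s := by
    by_contra! h
    linarith [hP.2, Finset.sum_nonpos fun s (_ : s ∈ Finset.univ) => h s]
  exact Finset.sum_pos' (fun s _ => mul_nonneg (hP.1 s) (hf s).le)
    ⟨s₀, Finset.mem_univ _, mul_pos hs₀ (hf s₀)⟩

lemma IsSymmetricDesign.sum_mul_comp_perm (hP : IsSymmetricDesign P) (σ : Equiv.Perm (Fin t))
    (f : (Fin p → Fin t) → ℝ) : ∑ s, P s * f (fun k => σ (s k)) = ∑ s, P s * f s :=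
  Fintype.sum_equiv (Equiv.piCongrRight fun _ => σ) _ _ fun s => by
    show _ = P (fun k => σ (s k)) * _
    rw [hP σ s]
    rfl

lemma Tmat_comp_perm_apply (σ : Equiv.Perm (Fin t)) (s : Fin p → Fin t) (k : Fin p)
    (i : Fin t) : Tmat (fun k => σ (s k)) k (σ i) = Tmat s k i := by
  simp [Tmat]

lemma Tmat_mulVec_one (s : Fin p → Fin t) : Tmat s *ᵥ 1 = 1 := by
  ext k
  simp [mulVec, dotProduct, Tmat]

lemma Tbar_mulVec_one (hP : IsDesign P) : Tbar P *ᵥ 1 = 1 := by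
  simp [Tbar, sum_mulVec, smul_mulVec, Tmat_mulVec_one, ← Finset.sum_smul, hP.2]

lemma Tbar_apply (hP : IsDesign P) (hPsym : IsSymmetricDesign P) (k : Fin p) (i : Fin t) :
    Tbar P k i = (t : ℝ)⁻¹ := by
  have hTbar : ∀ j, Tbar P k j = ∑ s, P s * Tmat s k j := fun j => by
    simp [Tbar, Matrix.sum_apply]
  have hconst : ∀ j, Tbar P k j = Tbar P k i := fun j => by
    rw [hTbar, hTbar, ← hPsym.sum_mul_comp_perm (Equiv.swap i j)]
    simp [Tmat, Equiv.swap_apply_eq_iff]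
  have hrow := congrFun (Tbar_mulVec_one hP) k
  simp only [mulVec, dotProduct, Pi.one_apply, mul_one] at hrow
  rw [Finset.sum_congr rfl fun j _ => hconst j, Finset.sum_const, Finset.card_univ,
    Fintype.card_fin, nsmul_eq_mul] at hrow
  exact eq_inv_of_mul_eq_one_right hrow

lemma Tbar_mul_Bsq (hP : IsDesign P) (hPsym : IsSymmetricDesign P) : Tbar P * Bsq t = 0 := by
  ext k j
  have := congrFun (one_vecMul_Bsq (t := t)) j
  simp only [vecMul, dotProduct, Pi.one_apply, one_mul] at this
  simp [mul_apply, Tbar_apply hP hPsym, ← Finset.mul_sum, this]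

lemma transpose_Tbar_mulVec_eq_zero (hP : IsDesign P) (hPsym : IsSymmetricDesign P)
    {Z : Matrix (Fin p) (Fin p) ℝ} (hZ : 1 ᵥ* Z = 0) : (Tbar P)ᵀ *ᵥ (Z *ᵥ 1) = 0 := by
  have hsum : ∑ k, (Z *ᵥ 1) k = 0 := by
    simpa [dotProduct_mulVec, hZ] using (one_dotProduct (Z *ᵥ 1)).symm
  ext i
  rw [mulVec, dotProduct]
  simp only [transpose_apply, Tbar_apply hP hPsym, ← Finset.mul_sum, hsum, mul_zero,
    Pi.zero_apply]

end Design

section InfoBlock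

variable {p t n : ℕ} {P : (Fin p → Fin t) → ℝ}

def shiftMat (p : ℕ) : Matrix (Fin p) (Fin p) ℝ :=
  of fun k l => if (k : ℕ) = l + 1 then 1 else 0

lemma Fmat_eq_shiftMat_mul (s : Fin p → Fin t) : Fmat s = shiftMat p * Tmat s := by
  ext k i
  simp only [Fmat, shiftMat, Tmat, mul_apply, of_apply, ite_mul, one_mul, zero_mul]
  by_cases hk : (k : ℕ) = 0
  · simp [hk]
  · rw [if_neg hk, Finset.sum_eq_single ⟨k - 1, by omega⟩
      (fun l _ hl => if_neg fun h => hl (Fin.ext (by show (l : ℕ) = k - 1; omega)))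
      (fun h => absurd (Finset.mem_univ _) h)]
    simp [Nat.sub_add_cancel (Nat.pos_of_ne_zero hk)]

lemma Fbar_eq_shiftMat_mul : Fbar P = shiftMat p * Tbar P := by
  simp [Fbar, Tbar, Fmat_eq_shiftMat_mul, Matrix.mul_sum]

def infoBlock (n : ℕ) (P : (Fin p → Fin t) → ℝ) (X Y : Matrix (Fin p) (Fin p) ℝ) :
    Matrix (Fin t) (Fin t) ℝ :=
  (n : ℝ) • (∑ s, P s • ((Tmat s)ᵀ * X * Tmat s) - (Tbar P)ᵀ * Y * Tbar P)

variable {X Y : Matrix (Fin p) (Fin p) ℝ}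

lemma infoBlock_isPermInvariant (hP : IsDesign P) (hPsym : IsSymmetricDesign P) :
    (infoBlock n P X Y).IsPermInvariant := by
  intro σ i j
  simp only [infoBlock, Matrix.smul_apply, Matrix.sub_apply, Matrix.sum_apply, smul_eq_mul]
  congr 2
  · rw [← hPsym.sum_mul_comp_perm σ]
    simp [mul_apply, Tmat_comp_perm_apply]
  · simp [mul_apply, Tbar_apply hP hPsym]

lemma infoBlock_mulVec_one (hP : IsDesign P) (hPsym : IsSymmetricDesign P)
    (hX : 1 ᵥ* X = 0) (hY : 1 ᵥ* Y = 0) : infoBlock n P X Y *ᵥ 1 = 0 := by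
  have hsum : (∑ s, P s • ((Tmat s)ᵀ * X * Tmat s)) *ᵥ 1 = (Tbar P)ᵀ *ᵥ (X *ᵥ 1) := by
    simp only [sum_mulVec, smul_mulVec, ← mulVec_mulVec, Tmat_mulVec_one, Tbar,
      transpose_sum, transpose_smul]
  rw [infoBlock, smul_mulVec, sub_mulVec, hsum, ← mulVec_mulVec, ← mulVec_mulVec,
    Tbar_mulVec_one hP, transpose_Tbar_mulVec_eq_zero hP hPsym hX,
    transpose_Tbar_mulVec_eq_zero hP hPsym hY, sub_zero, smul_zero]

lemma trace_Bsq_mul_infoBlock_mul_Bsq (hP : IsDesign P) (hPsym : IsSymmetricDesign P) :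
    (Bsq t * infoBlock n P X Y * Bsq t).trace =
      n * ∑ s, P s * (Bsq t * (Tmat s)ᵀ * X * Tmat s * Bsq t).trace := by
  have hKTbar : Bsq t * (Tbar P)ᵀ = 0 := by
    rw [← Bsq_transpose, ← transpose_mul, Tbar_mul_Bsq hP hPsym, transpose_zero]
  simp only [infoBlock, Matrix.mul_smul, Matrix.smul_mul, Matrix.mul_sub, Matrix.sub_mul,
    Matrix.mul_sum, Matrix.sum_mul, trace_smul, trace_sub, trace_sum, smul_eq_mul,
    Matrix.mul_assoc]
  simp [← Matrix.mul_assoc, hKTbar]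

end InfoBlock

section Coefficients

variable {p n : ℕ} {a : ℕ → ℝ}

lemma aInt_one_nonneg (ha0 : ∀ k ∈ Finset.Icc 1 p, 0 ≤ a k) {k : ℕ} (hk : k ≤ p) :
    0 ≤ aInt a 1 k :=
  Finset.sum_nonneg fun i hi => ha0 i (Finset.Icc_subset_Icc_right hk hi)

lemma aInt_one_le_one (ha0 : ∀ k ∈ Finset.Icc 1 p, 0 ≤ a k)
    (hsum : ∑ k ∈ Finset.Icc 1 p, a k = 1) {k : ℕ} (hk : k ≤ p) : aInt a 1 k ≤ 1 :=
  hsum ▸ Finset.sum_le_sum_of_subset_of_nonneg (Finset.Icc_subset_Icc_right hk)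
    fun i hi _ => ha0 i hi

lemma aInt_one_eq_add {k : ℕ} (hk : 1 ≤ k) : aInt a 1 k = aInt a 1 (k - 1) + a k := by
  obtain ⟨j, rfl⟩ := Nat.exists_eq_add_of_le' hk
  exact Finset.sum_Icc_succ_top (by omega) a

lemma alphaCoef_nonneg (ha0 : ∀ k ∈ Finset.Icc 1 p, 0 ≤ a k)
    (hsum : ∑ k ∈ Finset.Icc 1 p, a k = 1) {k : ℕ} (hk : k ∈ Finset.Icc 1 p) :
    0 ≤ alphaCoef n a k := by
  obtain ⟨hk1, hkp⟩ := Finset.mem_Icc.1 hk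
  have hc := aInt_one_nonneg ha0 (k := k - 1) (by omega)
  have hd := aInt_one_eq_add (a := a) hk1
  have hak := ha0 k hk
  have := pow_sub_pow_le_mul_sub (n + 1) hc (by linarith) (hd ▸ aInt_one_le_one ha0 hsum hkp)
  rw [add_sub_cancel_left] at this
  rw [alphaCoef, hd]
  push_cast at this
  exact div_nonneg (by nlinarith) n.cast_nonneg

lemma alphaCoef_pos (hn : 1 ≤ n) (ha0 : ∀ k ∈ Finset.Icc 1 p, 0 ≤ a k)
    (hsum : ∑ k ∈ Finset.Icc 1 p, a k = 1) {k : ℕ} (hk : k ∈ Finset.Icc 1 p) (hak : 0 < a k) :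
    0 < alphaCoef n a k := by
  obtain ⟨hk1, hkp⟩ := Finset.mem_Icc.1 hk
  have hc := aInt_one_nonneg ha0 (k := k - 1) (by omega)
  have hd := aInt_one_eq_add (a := a) hk1
  have := pow_sub_pow_lt_mul_sub (by omega : 2 ≤ n + 1) hc (by linarith)
    (hd ▸ aInt_one_le_one ha0 hsum hkp)
  rw [add_sub_cancel_left] at this
  rw [alphaCoef, hd]
  push_cast at this
  exact div_pos (by nlinarith) (by exact_mod_cast hn)

end Coefficients

section Positivity

variable {p t n : ℕ} {a : ℕ → ℝ}

lemma q22_eq_sum (s : Fin p → Fin t) :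
    q22 p t n a s = ∑ k ∈ Finset.Icc 1 p,
      alphaCoef n a k * ((Bblock k p p * Fhat s)ᵀ * (Bblock k p p * Fhat s)).trace := by
  rw [q22, Amat, Matrix.mul_sum, Matrix.sum_mul, Matrix.sum_mul, trace_sum]
  refine Finset.sum_congr rfl fun k hk => ?_
  rw [Matrix.mul_smul, smul_mul, smul_mul, trace_smul, smul_eq_mul, transpose_mul, Fhat,
    transpose_mul, Bsq_transpose, Bblock_transpose, ← Matrix.mul_assoc (_ * _) (Bblock k p p),
    Matrix.mul_assoc _ (Bblock k p p) (Bblock k p p), Bblock_mul_self (Finset.mem_Icc.1 hk).2]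
  simp only [Matrix.mul_assoc]

lemma Bblock_mul_Fhat_ne_zero (ht : 2 ≤ t) {k : ℕ} (hk : 2 ≤ k) (hkp : k ≤ p)
    (s : Fin p → Fin t) : Bblock k p p * Fhat s ≠ 0 := by
  intro h
  set i₀ : Fin p := ⟨0, by omega⟩
  set i₁ : Fin p := ⟨1, by omega⟩
  -- Periods 1 and 2 both lie in the block of `B^k_p`, and in column `s(1)` the entries of `F̂_s`
  -- in these periods are `0` and `1 − 1/t`.
  have hcol := Bblock_mulVec_sub (a := i₁) (b := i₀) (show 1 < k by omega) (show 0 < k by omega)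
    fun c => Fhat s c (s i₀)
  have hzero : ∀ c, (Bblock k p p *ᵥ fun c => Fhat s c (s i₀)) c = 0 := fun c =>
    congrFun₂ h c (s i₀)
  have hF₀ : Fhat s i₀ (s i₀) = 0 := by simp [Fhat, Fmat, mul_apply, i₀]
  have hF₁ : Fhat s i₁ (s i₀) = 1 - 1 / t := by
    simp [Fhat, Fmat, mul_apply, Bsq_apply, i₁, i₀]
  rw [hzero, hzero, hF₀, hF₁] at hcol
  have : (2 : ℝ) ≤ t := by exact_mod_cast ht
  have : (1 : ℝ) / t < 1 := by rw [div_lt_one (by linarith)]; linarith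
  linarith

lemma q22_pos (ht : 2 ≤ t) (hn : 1 ≤ n) (ha0 : ∀ k ∈ Finset.Icc 1 p, 0 ≤ a k)
    (hsum : ∑ k ∈ Finset.Icc 1 p, a k = 1) (hex : ∃ k ∈ Finset.Icc 2 p, 0 < a k)
    (s : Fin p → Fin t) : 0 < q22 p t n a s := by
  obtain ⟨k₀, hk₀, hak₀⟩ := hex
  obtain ⟨hk₀2, hk₀p⟩ := Finset.mem_Icc.1 hk₀
  have hk₀' : k₀ ∈ Finset.Icc 1 p := Finset.mem_Icc.2 ⟨by omega, hk₀p⟩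
  rw [q22_eq_sum]
  exact Finset.sum_pos'
    (fun k hk => mul_nonneg (alphaCoef_nonneg ha0 hsum hk) (trace_transpose_mul_self_nonneg _))
    ⟨k₀, hk₀', mul_pos (alphaCoef_pos hn ha0 hsum hk₀' hak₀)
      (trace_transpose_mul_self_pos (Bblock_mul_Fhat_ne_zero ht hk₀2 hk₀p s))⟩

end Positivity

section InformationMatrix

variable {p t n : ℕ} {a : ℕ → ℝ} {P : (Fin p → Fin t) → ℝ}

lemma one_vecMul_sum_smul_Bblock (c : ℕ → ℝ) :
    (1 : Fin p → ℝ) ᵥ* ∑ k ∈ Finset.Icc 1 p, c k • Bblock k p p = 0 := by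
  rw [vecMul_sum]
  exact Finset.sum_eq_zero fun k hk => by
    rw [vecMul_smul, one_vecMul_Bblock (Finset.mem_Icc.1 hk).2, smul_zero]

lemma one_vecMul_Amat : 1 ᵥ* Amat p n a = 0 := one_vecMul_sum_smul_Bblock _

lemma one_vecMul_Bmat : 1 ᵥ* Bmat p n a = 0 := one_vecMul_sum_smul_Bblock _

lemma C11_eq_infoBlock : C11 p t n a P = infoBlock n P (Amat p n a) (Bmat p n a) := rfl

lemma C12_eq_infoBlock :
    C12 p t n a P = infoBlock n P (Amat p n a * shiftMat p) (Bmat p n a * shiftMat p) := by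
  simp only [C12, infoBlock, Fbar_eq_shiftMat_mul, Fmat_eq_shiftMat_mul, Matrix.mul_assoc]

lemma C22_eq_infoBlock :
    C22 p t n a P = infoBlock n P ((shiftMat p)ᵀ * Amat p n a * shiftMat p)
      ((shiftMat p)ᵀ * Bmat p n a * shiftMat p) := by
  simp only [C22, infoBlock, Fbar_eq_shiftMat_mul, Fmat_eq_shiftMat_mul, transpose_mul,
    Matrix.mul_assoc]

lemma C11_isPermInvariant (hP : IsDesign P) (hPsym : IsSymmetricDesign P) :
    (C11 p t n a P).IsPermInvariant :=
  infoBlock_isPermInvariant hP hPsym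

lemma C12_isPermInvariant (hP : IsDesign P) (hPsym : IsSymmetricDesign P) :
    (C12 p t n a P).IsPermInvariant :=
  C12_eq_infoBlock ▸ infoBlock_isPermInvariant hP hPsym

lemma C22_isPermInvariant (hP : IsDesign P) (hPsym : IsSymmetricDesign P) :
    (C22 p t n a P).IsPermInvariant :=
  C22_eq_infoBlock ▸ infoBlock_isPermInvariant hP hPsym

lemma C11_mulVec_one (hP : IsDesign P) (hPsym : IsSymmetricDesign P) :
    C11 p t n a P *ᵥ 1 = 0 :=
  infoBlock_mulVec_one hP hPsym one_vecMul_Amat one_vecMul_Bmat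

lemma C12_mulVec_one (hP : IsDesign P) (hPsym : IsSymmetricDesign P) :
    C12 p t n a P *ᵥ 1 = 0 := by
  rw [C12_eq_infoBlock]
  exact infoBlock_mulVec_one hP hPsym (by rw [← vecMul_vecMul, one_vecMul_Amat, zero_vecMul])
    (by rw [← vecMul_vecMul, one_vecMul_Bmat, zero_vecMul])

lemma trace_Bsq_mul_C11_mul_Bsq (hP : IsDesign P) (hPsym : IsSymmetricDesign P) :
    (Bsq t * C11 p t n a P * Bsq t).trace = n * ∑ s, P s * q11 p t n a s :=
  trace_Bsq_mul_infoBlock_mul_Bsq hP hPsym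

lemma trace_Bsq_mul_C12_mul_Bsq (hP : IsDesign P) (hPsym : IsSymmetricDesign P) :
    (Bsq t * C12 p t n a P * Bsq t).trace = n * ∑ s, P s * q12 p t n a s := by
  rw [C12_eq_infoBlock, trace_Bsq_mul_infoBlock_mul_Bsq hP hPsym]
  simp only [q12, Fmat_eq_shiftMat_mul, Matrix.mul_assoc]

lemma trace_Bsq_mul_C22_mul_Bsq (hP : IsDesign P) (hPsym : IsSymmetricDesign P) :
    (Bsq t * C22 p t n a P * Bsq t).trace = n * ∑ s, P s * q22 p t n a s := by
  rw [C22_eq_infoBlock, trace_Bsq_mul_infoBlock_mul_Bsq hP hPsym]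
  simp only [q22, Fmat_eq_shiftMat_mul, transpose_mul, Matrix.mul_assoc]

lemma qmin_eq (hQ : 0 < ∑ s, P s * q22 p t n a s) :
    qmin p t n a P = ∑ s, P s * q11 p t n a s -
      (∑ s, P s * q12 p t n a s) ^ 2 / ∑ s, P s * q22 p t n a s := by
  rw [qmin, ← sInf_range_quadratic hQ]
  congr with x
  simp only [qfun, Finset.mul_sum, Finset.sum_mul, ← Finset.sum_add_distrib]
  exact Finset.sum_congr rfl fun s _ => by ring

lemma CInfo_eq_smul_Bsq (ht : 2 ≤ t) (hn : n ≠ 0) (hP : IsDesign P)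
    (hPsym : IsSymmetricDesign P) (hQ : 0 < ∑ s, P s * q22 p t n a s)
    {W : Matrix (Fin t) (Fin t) ℝ} (hW : IsGInv (C22 p t n a P) W) :
    CInfo p t n a P W = (n * qmin p t n a P / (t - 1)) • Bsq t := by
  have h₁₁ := (C11_isPermInvariant (n := n) (a := a) hP hPsym).eq_smul_Bsq ht
    (C11_mulVec_one hP hPsym)
  have h₁₂ := (C12_isPermInvariant (n := n) (a := a) hP hPsym).eq_smul_Bsq ht
    (C12_mulVec_one hP hPsym)
  have h₂₂ := (C22_isPermInvariant (n := n) (a := a) hP hPsym).Bsq_mul_eq_and_mul_Bsq_eq ht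
  rw [trace_Bsq_mul_C11_mul_Bsq hP hPsym] at h₁₁
  rw [trace_Bsq_mul_C12_mul_Bsq hP hPsym] at h₁₂
  rw [trace_Bsq_mul_C22_mul_Bsq hP hPsym] at h₂₂
  have ht1 := cast_sub_one_ne_zero ht
  rw [CInfo, sub_mul_mul_transpose_eq_smul Bsq_mul_self Bsq_transpose h₁₁ h₁₂ h₂₂.1 h₂₂.2
    (by positivity) hW, qmin_eq hQ]
  congr 1
  field_simp

end InformationMatrix

theorem symmetricDesign_CInfo_general
    (p t n : ℕ) (ht : 2 ≤ t) (hn : 1 ≤ n)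
    (a : ℕ → ℝ) (ha0 : ∀ k ∈ Finset.Icc 1 p, 0 ≤ a k)
    (hsum : ∑ k ∈ Finset.Icc 1 p, a k = 1)
    (hex : ∃ k ∈ Finset.Icc 2 p, 0 < a k)
    (P : (Fin p → Fin t) → ℝ) (hP : IsDesign P) (hPsym : IsSymmetricDesign P) :
    ∀ W : Matrix (Fin t) (Fin t) ℝ, IsGInv (C22 p t n a P) W →
      ((∀ i j : Fin t, CInfo p t n a P W i i = CInfo p t n a P W j j) ∧
        (∀ i j k l : Fin t, i ≠ j → k ≠ l →
          CInfo p t n a P W i j = CInfo p t n a P W k l)) ∧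
      (CInfo p t n a P W).trace = (n : ℝ) * qmin p t n a P := by
  intro W hW
  have hQ := hP.sum_mul_pos (q22_pos ht hn ha0 hsum hex)
  rw [CInfo_eq_smul_Bsq ht (by omega) hP hPsym hQ hW]
  refine ⟨⟨fun i j => by simp [Bsq_apply], fun i j k l hij hkl => by simp [Bsq_apply, hij, hkl]⟩,
    ?_⟩
  rw [trace_smul, trace_Bsq (by omega), smul_eq_mul, div_mul_cancel₀ _ (cast_sub_one_ne_zero ht)]

/-- Theorem 3.2, parts (1) and (2): for every symmetric approximate design `P`,
the matrix `C(P)` is completely symmetric and `tr C(P) = n · min_x ∑_s p_s q_s(x)`. -/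
theorem symmetricDesign_CInfo
    (p t n : ℕ) (hp : 2 ≤ p) (ht : 2 ≤ t) (hn : 1 ≤ n)
    (a : ℕ → ℝ) (ha0 : ∀ k ∈ Finset.Icc 1 p, 0 ≤ a k)
    (hsum : ∑ k ∈ Finset.Icc 1 p, a k = 1)
    (hex : ∃ k ∈ Finset.Icc 2 p, 0 < a k)
    (P : (Fin p → Fin t) → ℝ) (hP : IsDesign P) (hPsym : IsSymmetricDesign P) :
    ∀ W : Matrix (Fin t) (Fin t) ℝ, IsGInv (C22 p t n a P) W →
      ((∀ i j : Fin t, CInfo p t n a P W i i = CInfo p t n a P W j j) ∧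
        (∀ i j k l : Fin t, i ≠ j → k ≠ l →
          CInfo p t n a P W i j = CInfo p t n a P W k l)) ∧
      (CInfo p t n a P W).trace = (n : ℝ) * qmin p t n a P :=
  symmetricDesign_CInfo_general p t n ht hn a ha0 hsum hex P hP hPsym
end
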